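/- arXiv:1707.07063 — 7 statements merged into one kernel-verified Lean document; each statement's English description precedes it below -/
import Mathlib

section
/- Let m ≥ 1, N ∈ ℕ, and x_1, …, x_m ∈ ℝ. Then ∑_{α ∈ J_N} ∏_{k=1}^m L_{α_k}(x_k) = ∑_{j=0}^N (−1)^j (binom(N+m−1, N−j)) (x_1 + ⋯ + x_m)^j / j!, i.e. the sum over all occupation vectors with total N of the products of Laguerre polynomials equals the generalized Laguerre polynomial L_N^{(m−1)} evaluated at the sum of the variables. -/
/-!
The generating function `∑ₙ L_n^{(a)}(x) tⁿ = (1 - t)^{-(a+1)} exp (-x t / (1 - t))` shows that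
the series of `L^{(a)}(x)` times the series of `L^{(b)}(y)` is the series of `L^{(a+b+1)}(x + y)`;
the theorem is the coefficient of `t^N` in the product of `m` copies of the series of
`L = L^{(0)}`. The convolution identity is checked coefficientwise: expanding in powers of
`x` and `y`, it reduces to the binomial theorem and to the Chu–Vandermonde identity
`∑_{p+q=N} C(p+a, a+j) C(q+b, b+l) = C(N+a+b+1, a+b+1+j+l)`, which is the coefficient of `t^N` in
`t^j (1-t)^{-(a+j+1)} · t^l (1-t)^{-(b+l+1)} = t^{j+l} (1-t)^{-(a+b+j+l+2)}`.
-/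

/-- The Laguerre polynomial `L_n(x) = ∑_{k=0}^n (-1)^k (n choose k) x^k / k!`. -/
noncomputable def laguerre (n : ℕ) (x : ℝ) : ℝ :=
  ∑ k ∈ Finset.range (n + 1), (-1) ^ k * (n.choose k : ℝ) * x ^ k / (k.factorial : ℝ)

open Finset PowerSeries Nat

theorem PowerSeries.coeff_prod_eq_sum_antidiagonalTuple {R : Type*} [CommSemiring R] {m : ℕ}
    (f : Fin m → R⟦X⟧) (N : ℕ) :
    coeff N (∏ k, f k) = ∑ α ∈ Nat.antidiagonalTuple m N, ∏ k, coeff (α k) (f k) := by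
  rw [coeff_prod, finsuppAntidiag, sum_map, ← piAntidiag_univ_fin_eq_antidiagonalTuple,
    ← sum_attach (piAntidiag univ N)]
  rfl

theorem Nat.sum_antidiagonal_add_choose_mul_add_choose (a b j l N : ℕ) :
    ∑ p ∈ antidiagonal N, (p.1 + a).choose (a + j) * (p.2 + b).choose (b + l) =
      (N + (a + b + 1)).choose (a + b + 1 + (j + l)) := by
  have coeff_X_pow_mul_invOneSubPow (c i n : ℕ) :
      coeff n (X ^ i * (invOneSubPow ℤ (c + i + 1)).val) = ((n + c).choose (c + i) : ℤ) := by
    rw [coeff_X_pow_mul', invOneSubPow_val_succ_eq_mk_add_choose, coeff_mk]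
    split_ifs with h
    · congr 2; omega
    · rw [Nat.choose_eq_zero_of_lt (by omega), Nat.cast_zero]
  have hmul : (X ^ j * (invOneSubPow ℤ (a + j + 1)).val) *
      (X ^ l * (invOneSubPow ℤ (b + l + 1)).val) =
        X ^ (j + l) * (invOneSubPow ℤ ((a + b + 1) + (j + l) + 1)).val := by
    rw [show (a + b + 1) + (j + l) + 1 = (a + j + 1) + (b + l + 1) by ring,
      invOneSubPow_add ℤ (a + j + 1), Units.val_mul, pow_add]
    ring
  have := congrArg (coeff N) hmul
  simp only [coeff_mul, coeff_X_pow_mul_invOneSubPow] at this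
  exact_mod_cast this

theorem Finset.sum_range_sum_range_eq_sum_range_sum_antidiagonal {M : Type*} [AddCommMonoid M]
    (N : ℕ) (G : ℕ → ℕ → M) (hG : ∀ j l, N < j + l → G j l = 0) :
    ∑ j ∈ range (N + 1), ∑ l ∈ range (N + 1), G j l =
      ∑ s ∈ range (N + 1), ∑ p ∈ antidiagonal s, G p.1 p.2 := by
  calc ∑ j ∈ range (N + 1), ∑ l ∈ range (N + 1), G j l
      = ∑ p ∈ range (N + 1) ×ˢ range (N + 1), G p.1 p.2 :=
        (sum_product (f := fun p ↦ G p.1 p.2) _ _).symm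
    _ = ∑ p ∈ (range (N + 1) ×ˢ range (N + 1)).filter (fun p ↦ p.1 + p.2 ≤ N),
          G p.1 p.2 :=
        (sum_filter_of_ne fun p _ hp ↦ by contrapose! hp; exact hG _ _ (by omega)).symm
    _ = ∑ s ∈ range (N + 1), ∑ p ∈ (range (N + 1) ×ˢ range (N + 1)).filter
          (fun p ↦ p.1 + p.2 ≤ N) with p.1 + p.2 = s, G p.1 p.2 :=
        (sum_fiberwise_of_maps_to (fun p hp ↦ by simp at hp ⊢; omega) _).symm
    _ = _ := sum_congr rfl fun s hs ↦ by
        congr 1; ext p; simp at hs ⊢; omega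

theorem add_pow_div_factorial_eq_sum_antidiagonal {K : Type*} [Field K] [CharZero K]
    (x y : K) (n : ℕ) :
    (x + y) ^ n / n ! = ∑ p ∈ antidiagonal n, x ^ p.1 / p.1 ! * (y ^ p.2 / p.2 !) := by
  have := congrArg (coeff n) (exp_mul_exp_eq_exp_add x y)
  simp only [coeff_mul, coeff_rescale, coeff_exp] at this
  simpa [div_eq_mul_inv, mul_comm, mul_left_comm, mul_assoc] using this.symm

/-- `genLaguerre a n x` is the generalized Laguerre polynomial `L_n^{(a)}(x)`. -/
noncomputable def genLaguerre (a n : ℕ) (x : ℝ) : ℝ :=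
  ∑ j ∈ range (n + 1), (-1) ^ j * ((n + a).choose (n - j) : ℝ) * x ^ j / j !

theorem laguerre_eq_genLaguerre_zero (n : ℕ) (x : ℝ) : laguerre n x = genLaguerre 0 n x := by
  refine sum_congr rfl fun j hj ↦ ?_
  rw [Nat.add_zero, Nat.choose_symm (by simpa [Nat.lt_succ_iff] using hj)]

/-- Writing the coefficient as `C(n+a, a+j)`, which vanishes for `j > n`, lets the sum run over
any range containing `0, …, n`. -/
theorem genLaguerre_eq_sum_range {a n K : ℕ} (hn : n ≤ K) (x : ℝ) :
    genLaguerre a n x =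
      ∑ j ∈ range (K + 1), ((n + a).choose (a + j) : ℝ) * ((-x) ^ j / j !) := by
  rw [genLaguerre, ← sum_range_add_sum_Ico _ (by omega : n + 1 ≤ K + 1),
    sum_eq_zero (s := Ico _ _) fun j hj ↦ ?_, add_zero]
  · refine sum_congr rfl fun j hj ↦ ?_
    rw [mem_range] at hj
    rw [← Nat.choose_symm_of_eq_add (by omega : n + a = (n - j) + (a + j)), neg_pow]
    ring
  · rw [mem_Ico] at hj
    rw [Nat.choose_eq_zero_of_lt (by omega), Nat.cast_zero, zero_mul]

theorem sum_antidiagonal_genLaguerre_mul_genLaguerre (a b N : ℕ) (x y : ℝ) :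
    ∑ p ∈ antidiagonal N, genLaguerre a p.1 x * genLaguerre b p.2 y =
      genLaguerre (a + b + 1) N (x + y) := by
  set c := a + b + 1
  set e : ℝ → ℕ → ℝ := fun z j ↦ (-z) ^ j / (j ! : ℝ)
  calc ∑ p ∈ antidiagonal N, genLaguerre a p.1 x * genLaguerre b p.2 y
      = ∑ p ∈ antidiagonal N, ∑ j ∈ range (N + 1), ∑ l ∈ range (N + 1),
          (((p.1 + a).choose (a + j) * (p.2 + b).choose (b + l) : ℕ) : ℝ) *
            (e x j * e y l) := by
        refine sum_congr rfl fun p hp ↦ ?_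
        rw [genLaguerre_eq_sum_range (HasAntidiagonal.antidiagonal.fst_le hp),
          genLaguerre_eq_sum_range (HasAntidiagonal.antidiagonal.snd_le hp), sum_mul_sum]
        simp only [e, Nat.cast_mul]
        exact sum_congr rfl fun _ _ ↦ sum_congr rfl fun _ _ ↦ by ring
    _ = ∑ j ∈ range (N + 1), ∑ l ∈ range (N + 1),
          ((N + c).choose (c + (j + l)) : ℝ) * (e x j * e y l) := by
        rw [sum_comm]
        refine sum_congr rfl fun j _ ↦ ?_
        rw [sum_comm]
        refine sum_congr rfl fun l _ ↦ ?_
        rw [← sum_mul, ← Nat.cast_sum, Nat.sum_antidiagonal_add_choose_mul_add_choose]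
    _ = ∑ s ∈ range (N + 1), ∑ p ∈ antidiagonal s,
          ((N + c).choose (c + s) : ℝ) * (e x p.1 * e y p.2) := by
        rw [sum_range_sum_range_eq_sum_range_sum_antidiagonal]
        · exact sum_congr rfl fun s _ ↦ sum_congr rfl fun p hp ↦ by rw [mem_antidiagonal.1 hp]
        · intro j l h
          rw [Nat.choose_eq_zero_of_lt (by omega), Nat.cast_zero, zero_mul]
    _ = genLaguerre c N (x + y) := by
        rw [genLaguerre_eq_sum_range le_rfl]
        refine sum_congr rfl fun s _ ↦ ?_
        rw [← mul_sum, neg_add, add_pow_div_factorial_eq_sum_antidiagonal]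

noncomputable def laguerreSeries (a : ℕ) (x : ℝ) : ℝ⟦X⟧ :=
  PowerSeries.mk fun n ↦ genLaguerre a n x

theorem laguerreSeries_mul_laguerreSeries (a b : ℕ) (x y : ℝ) :
    laguerreSeries a x * laguerreSeries b y = laguerreSeries (a + b + 1) (x + y) := by
  ext N
  simp only [laguerreSeries, coeff_mul, coeff_mk, sum_antidiagonal_genLaguerre_mul_genLaguerre]

theorem prod_laguerreSeries_zero {m : ℕ} (x : Fin (m + 1) → ℝ) :
    ∏ k, laguerreSeries 0 (x k) = laguerreSeries m (∑ k, x k) := by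
  induction m with
  | zero => simp
  | succ m ih =>
    rw [Fin.prod_univ_succ, ih, laguerreSeries_mul_laguerreSeries, zero_add, ← Fin.sum_univ_succ]

/-- Summing products of Laguerre polynomials over all occupation vectors with total `N`
gives the generalized Laguerre polynomial `L_N^{(m-1)}` of the sum of the variables. -/
theorem sum_prod_laguerre_eq_genLaguerre (m N : ℕ) (hm : 1 ≤ m) (x : Fin m → ℝ) :
    ∑ α ∈ Finset.Nat.antidiagonalTuple m N, ∏ k, laguerre (α k) (x k) =
      ∑ j ∈ Finset.range (N + 1),
        (-1) ^ j * ((N + m - 1).choose (N - j) : ℝ) * (∑ k, x k) ^ j / (j.factorial : ℝ) := by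
  obtain ⟨m, rfl⟩ : ∃ m', m = m' + 1 := ⟨m - 1, by omega⟩
  have h := congrArg (coeff N) (prod_laguerreSeries_zero x)
  rw [coeff_prod_eq_sum_antidiagonalTuple] at h
  simpa [laguerreSeries, laguerre_eq_genLaguerre_zero, genLaguerre] using h
end

section
/- For every ℓ ∈ ℕ and all ζ, x ∈ ℝ, ∑_{j=0}^ℓ binom(ℓ,j) (−ζ)^j (1+ζ)^{ℓ−j} L_{ℓ−j}(x) = L_ℓ((1+ζ) x). -/
open Finset Nat

theorem Nat.choose_mul_choose_sub_comm (n j k : ℕ) :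
    n.choose j * (n - j).choose k = n.choose k * (n - k).choose j := by
  have hj := Nat.choose_mul (n := n) (Nat.le_add_right j k)
  have hk := Nat.choose_mul (n := n) (Nat.le_add_left k j)
  rw [Nat.add_sub_cancel_left] at hj
  rw [Nat.add_sub_cancel] at hk
  rw [← hj, ← hk, Nat.choose_symm_add]

theorem sum_choose_mul_pow_mul_sum_choose {R : Type*} [CommSemiring R] (a b : R) (c : ℕ → R)
    (n : ℕ) :
    ∑ j ∈ range (n + 1), (n.choose j : R) * a ^ j * b ^ (n - j) *
        ∑ k ∈ range (n - j + 1), ((n - j).choose k : R) * c k =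
      ∑ k ∈ range (n + 1), (n.choose k : R) * (a + b) ^ (n - k) * (b ^ k * c k) := by
  simp_rw [mul_sum]
  rw [sum_comm' (t' := range (n + 1)) (s' := fun k => range (n - k + 1))
    (by intro j k; simp only [mem_range]; omega)]
  refine sum_congr rfl fun k hk => ?_
  rw [add_pow, mul_sum, sum_mul]
  refine sum_congr rfl fun j hj => ?_
  have hchoose : (n.choose j : R) * (n - j).choose k = n.choose k * (n - k).choose j := by
    simpa only [Nat.cast_mul] using congrArg (Nat.cast : ℕ → R) (n.choose_mul_choose_sub_comm j k)
  have hpow : b ^ (n - j) = b ^ k * b ^ (n - k - j) := by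
    rw [← pow_add]
    congr 1
    simp only [mem_range] at hj hk
    omega
  calc _ = (n.choose j : R) * (n - j).choose k * (a ^ j * b ^ (n - j) * c k) := by ring
    _ = _ := by rw [hchoose, hpow]; ring

theorem laguerre_eq_sum_choose (n : ℕ) (x : ℝ) :
    laguerre n x = ∑ k ∈ range (n + 1), (n.choose k : ℝ) * ((-x) ^ k / k !) := by
  refine sum_congr rfl fun k _ => ?_
  rw [neg_pow]
  ring

/-- `∑_{j=0}^ℓ binom(ℓ,j) (−ζ)^j (1+ζ)^{ℓ−j} L_{ℓ−j}(x) = L_ℓ((1+ζ) x)`. -/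
theorem sum_laguerre_scaling (ℓ : ℕ) (ζ x : ℝ) :
    ∑ j ∈ Finset.range (ℓ + 1),
        (ℓ.choose j : ℝ) * (-ζ) ^ j * (1 + ζ) ^ (ℓ - j) * laguerre (ℓ - j) x =
      laguerre ℓ ((1 + ζ) * x) := by
  simp_rw [laguerre_eq_sum_choose]
  rw [sum_choose_mul_pow_mul_sum_choose, show -ζ + (1 + ζ) = 1 by ring]
  refine sum_congr rfl fun k _ => ?_
  rw [one_pow, mul_one, mul_div_assoc', ← mul_pow, mul_neg]
end

section
/- Let a > 0 and ℓ ∈ ℕ, and set ζ_a = (a−1)/(a+1) and λ_{n,a}^{(ℓ)} = ∑_{j=0}^ℓ σ_{j,ℓ}(ζ_a) ω_{n,j,ℓ}(ζ_a) for n ∈ ℕ. Then the series ∑_{n=0}^∞ |λ_{n,a}^{(ℓ)}| converges and ∑_{n=0}^∞ |λ_{n,a}^{(ℓ)}| ≤ g_a(ℓ), where g_a(ℓ) = a^ℓ if a ≥ 1 and g_a(ℓ) = (1/a)^{ℓ+1} if a < 1. (This is the trace-norm bound ‖ρ_a^{(ℓ)}‖₁ ≤ g_a(ℓ) for the diagonal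 operator ρ_a^{(ℓ)} with eigenvalues λ_{n,a}^{(ℓ)}.) -/
/-- `σ_{j,ℓ}(ζ) = binom(ℓ,j) (−ζ)^j (1+ζ)^{ℓ−j}`. -/
noncomputable def sigmaCoeff (j ℓ : ℕ) (ζ : ℝ) : ℝ :=
  (ℓ.choose j : ℝ) * (-ζ) ^ j * (1 + ζ) ^ (ℓ - j)

/-- `ω_{n,j,ℓ}(ζ) = binom(n, ℓ−j) ζ^{n−(ℓ−j)} (1−ζ)^{ℓ−j+1}` if `n ≥ ℓ−j`, else `0`. -/
noncomputable def omegaCoeff (n j ℓ : ℕ) (ζ : ℝ) : ℝ :=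
  if ℓ - j ≤ n then (n.choose (ℓ - j) : ℝ) * ζ ^ (n - (ℓ - j)) * (1 - ζ) ^ (ℓ - j + 1)
  else 0

/-- The eigenvalues `λ_{n,a}^{(ℓ)}` of the operator `ρ_a^{(ℓ)}`, with `ζ_a = (a−1)/(a+1)`. -/
noncomputable def lamEig (a : ℝ) (ℓ n : ℕ) : ℝ :=
  ∑ j ∈ Finset.range (ℓ + 1),
    sigmaCoeff j ℓ ((a - 1) / (a + 1)) * omegaCoeff n j ℓ ((a - 1) / (a + 1))

lemma omega_abs_hasSum (j ℓ : ℕ) {ζ : ℝ} (hζ : |ζ| < 1) (hz : ζ ≤ 1) :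
    HasSum (fun n : ℕ => |omegaCoeff n j ℓ ζ|)
      ((1 - ζ) ^ (ℓ - j + 1) / (1 - |ζ|) ^ (ℓ - j + 1)) := by
  have h1m : (0:ℝ) ≤ 1 - ζ := by linarith
  have habs : ∀ n : ℕ, |omegaCoeff n j ℓ ζ| =
      (if ℓ - j ≤ n then (n.choose (ℓ - j) : ℝ) * |ζ| ^ (n - (ℓ - j)) * (1 - ζ) ^ (ℓ - j + 1)
        else 0) := by
    intro n
    unfold omegaCoeff
    split_ifs with h
    · rw [abs_mul, abs_mul, abs_pow, abs_pow, Nat.abs_cast, abs_of_nonneg h1m]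
    · simp
  have hr : ‖|ζ|‖ < 1 := by rwa [Real.norm_eq_abs, abs_abs]
  have H := (hasSum_choose_mul_geometric_of_norm_lt_one (ℓ - j) hr).mul_right
    ((1 - ζ) ^ (ℓ - j + 1))
  have H2 : HasSum (fun n : ℕ => |omegaCoeff (n + (ℓ - j)) j ℓ ζ|)
      ((1 - ζ) ^ (ℓ - j + 1) / (1 - |ζ|) ^ (ℓ - j + 1)) := by
    have hfun : (fun n : ℕ => |omegaCoeff (n + (ℓ - j)) j ℓ ζ|)
        = fun n : ℕ => (((n + (ℓ - j)).choose (ℓ - j) : ℝ) * |ζ| ^ n) * (1 - ζ) ^ (ℓ - j + 1) := by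
      funext n
      rw [habs (n + (ℓ - j)), if_pos (Nat.le_add_left _ n), Nat.add_sub_cancel, mul_assoc]
    have hval : (1 - ζ) ^ (ℓ - j + 1) / (1 - |ζ|) ^ (ℓ - j + 1)
        = 1 / (1 - |ζ|) ^ (ℓ - j + 1) * (1 - ζ) ^ (ℓ - j + 1) := by ring
    rw [hfun, hval]
    exact H
  have H3 := (hasSum_nat_add_iff (f := fun n => |omegaCoeff n j ℓ ζ|) (ℓ - j)).1 H2
  have hzero : ∑ i ∈ Finset.range (ℓ - j), |omegaCoeff i j ℓ ζ| = 0 := by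
    refine Finset.sum_eq_zero fun i hi => ?_
    rw [habs i, if_neg (not_le.mpr (Finset.mem_range.1 hi))]
  rwa [hzero, add_zero] at H3

lemma sum_choose_pow (ℓ : ℕ) (x y : ℝ) :
    ∑ j ∈ Finset.range (ℓ + 1), (ℓ.choose j : ℝ) * x ^ j * y ^ (ℓ - j) = (x + y) ^ ℓ := by
  rw [add_pow]
  exact Finset.sum_congr rfl fun j hj => by ring

/-- Trace-norm bound: `∑_{n=0}^∞ |λ_{n,a}^{(ℓ)}|` converges and is at most
`g_a(ℓ) = a^ℓ` if `a ≥ 1`, and `(1/a)^{ℓ+1}` if `a < 1`. -/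
theorem traceNorm_bound (a : ℝ) (ha : 0 < a) (ℓ : ℕ) :
    Summable (fun n : ℕ => |lamEig a ℓ n|) ∧
      (∑' n : ℕ, |lamEig a ℓ n|) ≤ (if 1 ≤ a then a ^ ℓ else (1 / a) ^ (ℓ + 1)) := by
  set ζ : ℝ := (a - 1) / (a + 1) with hζdef
  have hden : (0:ℝ) < a + 1 := by linarith
  have h1m : 1 - ζ = 2 / (a + 1) := by rw [hζdef]; field_simp; ring
  have h1p : 1 + ζ = 2 * a / (a + 1) := by rw [hζdef]; field_simp; ring
  have h1mpos : 0 < 1 - ζ := by rw [h1m]; positivity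
  have h1ppos : 0 < 1 + ζ := by rw [h1p]; positivity
  have habsζ : |ζ| < 1 := abs_lt.2 ⟨by linarith, by linarith⟩
  have h1abs : 0 < 1 - |ζ| := by linarith
  -- summability of each term
  have hsumF : ∀ j, HasSum (fun n => |sigmaCoeff j ℓ ζ * omegaCoeff n j ℓ ζ|)
      (|sigmaCoeff j ℓ ζ| * ((1 - ζ) ^ (ℓ - j + 1) / (1 - |ζ|) ^ (ℓ - j + 1))) := by
    intro j
    simpa [abs_mul] using (omega_abs_hasSum j ℓ habsζ (by linarith)).mul_left |sigmaCoeff j ℓ ζ|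
  have hG : HasSum (fun n => ∑ j ∈ Finset.range (ℓ + 1), |sigmaCoeff j ℓ ζ * omegaCoeff n j ℓ ζ|)
      (∑ j ∈ Finset.range (ℓ + 1),
        |sigmaCoeff j ℓ ζ| * ((1 - ζ) ^ (ℓ - j + 1) / (1 - |ζ|) ^ (ℓ - j + 1))) :=
    hasSum_sum fun j _ => hsumF j
  have hle : ∀ n, |lamEig a ℓ n| ≤
      ∑ j ∈ Finset.range (ℓ + 1), |sigmaCoeff j ℓ ζ * omegaCoeff n j ℓ ζ| := fun n =>
    Finset.abs_sum_le_sum_abs _ _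
  have hsummable : Summable fun n : ℕ => |lamEig a ℓ n| :=
    Summable.of_nonneg_of_le (fun n => abs_nonneg _) hle hG.summable
  refine ⟨hsummable, ?_⟩
  have hbound : (∑' n : ℕ, |lamEig a ℓ n|) ≤
      ∑ j ∈ Finset.range (ℓ + 1),
        |sigmaCoeff j ℓ ζ| * ((1 - ζ) ^ (ℓ - j + 1) / (1 - |ζ|) ^ (ℓ - j + 1)) := by
    rw [← hG.tsum_eq]
    exact Summable.tsum_le_tsum hle hsummable hG.summable
  refine hbound.trans ?_
  have habs_sigma : ∀ j, |sigmaCoeff j ℓ ζ| =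
      (ℓ.choose j : ℝ) * |ζ| ^ j * (1 + ζ) ^ (ℓ - j) := by
    intro j
    unfold sigmaCoeff
    rw [abs_mul, abs_mul, abs_pow, abs_pow, Nat.abs_cast, abs_neg, abs_of_nonneg h1ppos.le]
  by_cases hA : 1 ≤ a
  · rw [if_pos hA]
    have hzn : 0 ≤ ζ := div_nonneg (by linarith) hden.le
    have hterm : ∀ j, |sigmaCoeff j ℓ ζ| * ((1 - ζ) ^ (ℓ - j + 1) / (1 - |ζ|) ^ (ℓ - j + 1)) =
        (ℓ.choose j : ℝ) * ζ ^ j * (1 + ζ) ^ (ℓ - j) := by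
      intro j
      rw [habs_sigma j, abs_of_nonneg hzn, div_self (pow_ne_zero _ h1mpos.ne'), mul_one]
    calc ∑ j ∈ Finset.range (ℓ + 1),
          |sigmaCoeff j ℓ ζ| * ((1 - ζ) ^ (ℓ - j + 1) / (1 - |ζ|) ^ (ℓ - j + 1))
        = (ζ + (1 + ζ)) ^ ℓ := by
          rw [Finset.sum_congr rfl fun j _ => hterm j, sum_choose_pow]
      _ ≤ a ^ ℓ := by
          apply pow_le_pow_left₀ (by linarith)
          have hkey : a - (ζ + (1 + ζ)) = (a - 1) ^ 2 / (a + 1) := by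
            rw [hζdef]; field_simp; ring
          have := div_nonneg (sq_nonneg (a - 1)) hden.le
          linarith
  · rw [if_neg hA]
    push_neg at hA
    have hzn : ζ ≤ 0 := div_nonpos_of_nonpos_of_nonneg (by linarith) hden.le
    have habseq : |ζ| = -ζ := abs_of_nonpos hzn
    have hinv : (1 - ζ) / (1 + ζ) = 1 / a := by
      rw [h1m, h1p]
      rw [div_div_div_eq]
      field_simp
    have hterm : ∀ j, |sigmaCoeff j ℓ ζ| * ((1 - ζ) ^ (ℓ - j + 1) / (1 - |ζ|) ^ (ℓ - j + 1)) =
        (ℓ.choose j : ℝ) * (-ζ) ^ j * (1 - ζ) ^ (ℓ - j) * (1 / a) := by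
      intro j
      rw [habs_sigma j, habseq, sub_neg_eq_add]
      have key : (1 + ζ) ^ (ℓ - j) * ((1 - ζ) ^ (ℓ - j + 1) / (1 + ζ) ^ (ℓ - j + 1)) =
          (1 - ζ) ^ (ℓ - j) * (1 / a) := by
        rw [← hinv, pow_succ, pow_succ]
        field_simp
      calc (ℓ.choose j : ℝ) * (-ζ) ^ j * (1 + ζ) ^ (ℓ - j) *
            ((1 - ζ) ^ (ℓ - j + 1) / (1 + ζ) ^ (ℓ - j + 1))
          = (ℓ.choose j : ℝ) * (-ζ) ^ j *
            ((1 + ζ) ^ (ℓ - j) * ((1 - ζ) ^ (ℓ - j + 1) / (1 + ζ) ^ (ℓ - j + 1))) := by ring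
        _ = (ℓ.choose j : ℝ) * (-ζ) ^ j * (1 - ζ) ^ (ℓ - j) * (1 / a) := by rw [key]; ring
    calc ∑ j ∈ Finset.range (ℓ + 1),
          |sigmaCoeff j ℓ ζ| * ((1 - ζ) ^ (ℓ - j + 1) / (1 - |ζ|) ^ (ℓ - j + 1))
        = (-ζ + (1 - ζ)) ^ ℓ * (1 / a) := by
          rw [Finset.sum_congr rfl fun j _ => hterm j, ← Finset.sum_mul, sum_choose_pow]
      _ ≤ (1 / a) ^ ℓ * (1 / a) := by
          apply mul_le_mul_of_nonneg_right _ (by positivity)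
          apply pow_le_pow_left₀ (by linarith)
          have hkey : 1 / a - (-ζ + (1 - ζ)) = (a - 1) ^ 2 / (a * (a + 1)) := by
            rw [hζdef]; field_simp; ring
          have : (0:ℝ) ≤ (a - 1) ^ 2 / (a * (a + 1)) :=
            div_nonneg (sq_nonneg _) (by positivity)
          linarith
      _ = (1 / a) ^ (ℓ + 1) := by rw [pow_succ]
end

section
/- Let a > 0, ℓ ∈ ℕ, and x ≥ 0. Set ζ_a = (a−1)/(a+1) and λ_{n,a}^{(ℓ)} = ∑_{j=0}^ℓ σ_{j,ℓ}(ζ_a) ω_{n,j,ℓ}(ζ_a) for n ∈ ℕ. Then the series ∑_{n=0}^∞ λ_{n,a}^{(ℓ)} L_n(x) e^{−x/2} converges and its sum equals L_ℓ(a x) e^{−a x/2}. (This is the scaled characteristic-function identity ⟨W_z⟩_{ρ_a^{(ℓ)}} = L_ℓ(a|z|²/2) e^{−a|z|²/4} with x = |z|²/2.) -/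
open Finset

theorem Nat.choose_mul_choose_eq_sum (n m k : ℕ) :
    n.choose m * n.choose k =
      ∑ j ∈ range (k + 1), k.choose j * (m + j).choose k * n.choose (m + j) := by
  rcases lt_or_ge n m with hnm | hmn
  · rw [Nat.choose_eq_zero_of_lt hnm, zero_mul, eq_comm]
    exact sum_eq_zero fun j _ ↦ by rw [Nat.choose_eq_zero_of_lt (by omega : n < m + j), mul_zero]
  obtain ⟨p, rfl⟩ := Nat.exists_eq_add_of_le' hmn
  rw [Nat.add_choose_eq p m k, Nat.sum_antidiagonal_eq_sum_range_succ_mk, mul_sum]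
  refine sum_congr rfl fun j hj ↦ ?_
  have hjk : j ≤ k := Nat.lt_succ_iff.mp (mem_range.mp hj)
  have h₁ := Nat.choose_mul (n := p + m) (k := m + j) (s := m) (Nat.le_add_right m j)
  have h₂ := Nat.choose_mul (n := m + j) (k := k) (s := j) hjk
  rw [Nat.add_sub_cancel, Nat.add_sub_cancel_left] at h₁
  rw [Nat.add_sub_cancel, ← Nat.choose_symm_add] at h₂
  dsimp only
  calc (p + m).choose m * (p.choose j * m.choose (k - j))
      = (p + m).choose (m + j) * ((m + j).choose m * m.choose (k - j)) := by
        rw [← mul_assoc, ← h₁]; ring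
    _ = _ := by rw [← h₂]; ring

theorem choose_mul_pow_le_one_add_pow {R : Type*} [CommSemiring R] [PartialOrder R]
    [IsOrderedRing R] (n k : ℕ) {ε : R} (hε : 0 ≤ ε) :
    (n.choose k : R) * ε ^ k ≤ (1 + ε) ^ n := by
  rcases le_or_gt k n with hkn | hnk
  · rw [add_comm, add_pow]
    refine le_trans (le_of_eq ?_)
      (single_le_sum (fun i _ ↦ ?_) (mem_range.mpr (Nat.lt_succ_of_le hkn)))
    · ring
    · exact mul_nonneg (mul_nonneg (pow_nonneg hε _) (pow_nonneg zero_le_one _))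
        (Nat.cast_nonneg _)
  · rw [Nat.choose_eq_zero_of_lt hnk, Nat.cast_zero, zero_mul]
    exact pow_nonneg (add_nonneg zero_le_one hε) n

open Polynomial in
theorem sum_choose_mul_choose_mul_one_add_pow {R : Type*} [CommRing R] (m k : ℕ) (u : R) :
    ∑ i ∈ range (k + 1), (k.choose i : R) * m.choose i * (1 + u) ^ i * u ^ (k - i) =
      ∑ j ∈ range (k + 1), (k.choose j : R) * (m + j).choose k * u ^ j := by
  have key : ((1 + X) ^ m * (C (1 + u) + C u * X) ^ k : R[X]) =
      (1 + X) ^ m * (C u * (1 + X) + 1) ^ k := by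
    congr 2; simp only [map_add, map_one]; ring
  have h := congrArg (coeff · k) key
  simp only [add_pow (C (1 + u)), add_pow (C u * (1 + X)), mul_sum, finsetSum_coeff] at h
  convert h using 2 with i hi j hj
  · have hik : i ≤ k := Nat.lt_succ_iff.mp (mem_range.mp hi)
    rw [show (1 + X) ^ m * (C (1 + u) ^ i * (C u * X) ^ (k - i) * (k.choose i : R[X])) =
        C ((k.choose i : R) * (1 + u) ^ i * u ^ (k - i)) * ((1 + X) ^ m * X ^ (k - i)) by
      simp only [map_mul, map_pow, map_natCast]; ring]
    rw [coeff_C_mul, coeff_mul_X_pow', if_pos (Nat.sub_le k i), Nat.sub_sub_self hik,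
      coeff_one_add_X_pow]
    ring
  · rw [show (1 + X) ^ m * ((C u * (1 + X)) ^ j * 1 ^ (k - j) * (k.choose j : R[X])) =
        C ((k.choose j : R) * u ^ j) * (1 + X) ^ (m + j) by
      rw [mul_pow, pow_add, one_pow, map_mul, map_pow, map_natCast]; ring]
    rw [coeff_C_mul, coeff_one_add_X_pow]
    ring

open Polynomial in
theorem sum_choose_mul_choose_sub_mul_pow {R : Type*} [CommRing R] (l k : ℕ) (a b : R) :
    ∑ j ∈ range (l + 1), (l.choose j : R) * (l - j).choose k * a ^ j * b ^ (l - j) =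
      l.choose k * b ^ k * (a + b) ^ (l - k) := by
  have key : ((C a + C b * (1 + X)) ^ l : R[X]) = (C b * X + C (a + b)) ^ l := by
    congr 1; simp only [map_add]; ring
  have h := congrArg (coeff · k) key
  simp only [add_pow, finsetSum_coeff] at h
  convert h using 1
  · refine sum_congr rfl fun j _ ↦ ?_
    rw [show C a ^ j * (C b * (1 + X)) ^ (l - j) * (l.choose j : R[X]) =
        C ((l.choose j : R) * a ^ j * b ^ (l - j)) * (1 + X) ^ (l - j) by
      rw [mul_pow, map_mul, map_mul, map_pow, map_pow, map_natCast]; ring]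
    rw [coeff_C_mul, coeff_one_add_X_pow]
    ring
  · simp_rw [show ∀ i, (C b * X) ^ i * C (a + b) ^ (l - i) * (l.choose i : R[X]) =
        C (b ^ i * (a + b) ^ (l - i) * l.choose i) * X ^ i by
      intro i; rw [mul_pow, map_mul, map_mul, map_pow, map_pow, map_natCast]; ring]
    simp only [coeff_C_mul_X_pow, sum_ite_eq, mem_range]
    split_ifs with hk
    · ring
    · rw [Nat.choose_eq_zero_of_lt (by omega)]
      simp

theorem hasSum_choose_add_mul_pow_sub {𝕜 : Type*} [NormedField 𝕜] {t : 𝕜} (ht : ‖t‖ < 1)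
    (m j : ℕ) :
    HasSum (fun n ↦ (n.choose (m + j) : 𝕜) * t ^ (n - m)) (t ^ j / (1 - t) ^ (m + j + 1)) := by
  have hvanish : ∀ n ∉ Set.range (· + (m + j)), (n.choose (m + j) : 𝕜) * t ^ (n - m) = 0 := by
    intro n hn
    have : n < m + j := by
      by_contra! h
      exact hn ⟨n - (m + j), Nat.sub_add_cancel h⟩
    rw [Nat.choose_eq_zero_of_lt this, Nat.cast_zero, zero_mul]
  refine ((add_left_injective (m + j)).hasSum_iff hvanish).mp ?_
  have h := (hasSum_choose_mul_geometric_of_norm_lt_one (m + j) ht).mul_left (t ^ j)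
  rw [mul_one_div] at h
  refine h.congr_fun fun n ↦ ?_
  rw [Function.comp_apply, show n + (m + j) - m = j + n by omega, pow_add]
  ring

theorem hasSum_choose_mul_choose_mul_pow_sub {𝕜 : Type*} [NormedField 𝕜] {t : 𝕜}
    (ht : ‖t‖ < 1) (m k : ℕ) :
    HasSum (fun n ↦ (n.choose m : 𝕜) * n.choose k * t ^ (n - m))
      (∑ j ∈ range (k + 1),
        (k.choose j : 𝕜) * (m + j).choose k * (t ^ j / (1 - t) ^ (m + j + 1))) := by
  refine (hasSum_sum fun j _ ↦ (hasSum_choose_add_mul_pow_sub ht m j).mul_left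
    ((k.choose j : 𝕜) * (m + j).choose k)).congr_fun fun n ↦ ?_
  rw [← Nat.cast_mul, Nat.choose_mul_choose_eq_sum, Nat.cast_sum, sum_mul]
  refine sum_congr rfl fun j _ ↦ ?_
  push_cast
  ring

theorem hasSum_laguerre (n : ℕ) (x : ℝ) :
    HasSum (fun k ↦ (-1) ^ k * (n.choose k : ℝ) * x ^ k / k.factorial) (laguerre n x) :=
  hasSum_sum_of_ne_finset_zero fun k hk ↦ by
    rw [Nat.choose_eq_zero_of_lt (by simpa using hk)]
    simp

theorem hasSum_exp_mul_laguerre (m : ℕ) (u x : ℝ) :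
    HasSum (fun k ↦ (-1) ^ k * x ^ k / k.factorial *
        ∑ j ∈ range (k + 1), (k.choose j : ℝ) * (m + j).choose k * u ^ j)
      (Real.exp (-(u * x)) * laguerre m ((1 + u) * x)) := by
  have hL := hasSum_laguerre m ((1 + u) * x)
  have hexp : HasSum (fun j ↦ (-(u * x)) ^ j / j.factorial) (Real.exp (-(u * x))) := by
    rw [Real.exp_eq_exp_ℝ]
    exact NormedSpace.expSeries_div_hasSum_exp _
  have hcauchy := hasSum_sum_range_mul_of_summable_norm' hL.summable.norm
    hL.summable hexp.summable.norm hexp.summable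
  rw [hL.tsum_eq, hexp.tsum_eq] at hcauchy
  rw [mul_comm (Real.exp _)]
  refine hcauchy.congr_fun fun k ↦ ?_
  rw [← sum_choose_mul_choose_mul_one_add_pow, mul_sum]
  refine sum_congr rfl fun i hi ↦ ?_
  obtain ⟨l, rfl⟩ := Nat.exists_eq_add_of_le (Nat.lt_succ_iff.mp (mem_range.mp hi))
  have hchoose : ((i + l).choose i : ℝ) ≠ 0 := by
    exact_mod_cast (Nat.choose_pos (Nat.le_add_right i l)).ne'
  rw [Nat.add_sub_cancel_left, ← Nat.add_choose_mul_factorial_mul_factorial,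
    ← Nat.choose_symm_add]
  push_cast
  rw [mul_pow, neg_pow (u * x), mul_pow]
  field_simp
  ring

theorem summable_choose_mul_pow_mul_laguerre_term {t : ℝ} (ht : |t| < 1) (m : ℕ) (x : ℝ) :
    Summable fun p : ℕ × ℕ ↦ (p.1.choose m : ℝ) * t ^ (p.1 - m) *
      ((-1) ^ p.2 * (p.1.choose p.2 : ℝ) * x ^ p.2 / p.2.factorial) := by
  obtain ⟨ε, hε, hs⟩ : ∃ ε : ℝ, 0 < ε ∧ |t| * (1 + ε) < 1 :=
    ⟨(1 - |t|) / 2, by linarith, by nlinarith [abs_nonneg t]⟩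
  have hg :
      Summable fun n : ℕ ↦ (1 + ε) ^ m * ((n.choose m : ℝ) * (|t| * (1 + ε)) ^ (n - m)) := by
    have hs' : ‖|t| * (1 + ε)‖ < 1 := by rwa [Real.norm_of_nonneg (by positivity)]
    simpa using ((hasSum_choose_add_mul_pow_sub hs' m 0).summable.mul_left ((1 + ε) ^ m))
  refine Summable.of_norm_bounded (hg.mul_of_nonneg (Real.summable_pow_div_factorial (|x| / ε))
    (fun n ↦ by positivity) fun k ↦ by positivity) fun ⟨n, k⟩ ↦ ?_
  have hrow : (n.choose m : ℝ) * |t| ^ (n - m) * (1 + ε) ^ n =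
      (1 + ε) ^ m * ((n.choose m : ℝ) * (|t| * (1 + ε)) ^ (n - m)) := by
    rcases lt_or_ge n m with hnm | hmn
    · simp [Nat.choose_eq_zero_of_lt hnm]
    · obtain ⟨p, rfl⟩ := Nat.exists_eq_add_of_le hmn
      rw [Nat.add_sub_cancel_left, mul_pow, pow_add]
      ring
  have hcol : (n.choose k : ℝ) * |x| ^ k ≤ (1 + ε) ^ n * (|x| / ε) ^ k := by
    calc (n.choose k : ℝ) * |x| ^ k = (n.choose k : ℝ) * ε ^ k * (|x| / ε) ^ k := by
          rw [div_pow]; field_simp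
      _ ≤ _ :=
        mul_le_mul_of_nonneg_right (choose_mul_pow_le_one_add_pow n k hε.le) (by positivity)
  calc _ = (n.choose m : ℝ) * |t| ^ (n - m) * ((n.choose k : ℝ) * |x| ^ k) / k.factorial := by
        simp only [norm_mul, norm_div, norm_pow, norm_neg, norm_one, one_pow, Real.norm_eq_abs,
          Nat.abs_cast]
        ring
    _ ≤ (n.choose m : ℝ) * |t| ^ (n - m) * ((1 + ε) ^ n * (|x| / ε) ^ k) / k.factorial := by
        gcongr
    _ = _ := by rw [← hrow]; ring

theorem hasSum_choose_mul_pow_mul_laguerre {t : ℝ} (ht : |t| < 1) (m : ℕ) (x : ℝ) :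
    HasSum (fun n ↦ (n.choose m : ℝ) * t ^ (n - m) * laguerre n x)
      (Real.exp (-(t / (1 - t) * x)) * laguerre m (x / (1 - t)) / (1 - t) ^ (m + 1)) := by
  have h1t : 1 - t ≠ 0 := by linarith [le_abs_self t]
  have hF := (summable_choose_mul_pow_mul_laguerre_term ht m x).hasSum
  have hrows := hF.prod_fiberwise fun n ↦
    (hasSum_laguerre n x).mul_left ((n.choose m : ℝ) * t ^ (n - m))
  have hcols := ((Equiv.prodComm ℕ ℕ).hasSum_iff.mpr hF).prod_fiberwise fun k ↦
    ((hasSum_choose_mul_choose_mul_pow_sub (by rwa [Real.norm_eq_abs]) m k).mul_left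
      ((-1) ^ k * x ^ k / k.factorial)).congr_fun fun n ↦ by
        dsimp only [Function.comp_apply, Equiv.prodComm_apply, Prod.swap_prod_mk]
        ring
  have hexp := (hasSum_exp_mul_laguerre m (t / (1 - t)) x).div_const ((1 - t) ^ (m + 1))
  rw [show (1 + t / (1 - t)) * x = x / (1 - t) by field_simp; ring] at hexp
  refine (hcols.unique (hexp.congr_fun fun k ↦ ?_)) ▸ hrows
  rw [mul_div_assoc, mul_sum, mul_sum, sum_div]
  refine sum_congr rfl fun j _ ↦ ?_
  rw [div_pow, show m + j + 1 = m + 1 + j by omega, pow_add]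
  field_simp

theorem sum_choose_mul_pow_mul_laguerre_sub (l : ℕ) (μ y : ℝ) :
    ∑ j ∈ range (l + 1), (l.choose j : ℝ) * (1 - μ) ^ j * μ ^ (l - j) * laguerre (l - j) y =
      laguerre l (μ * y) := by
  have hL : ∀ j ∈ range (l + 1), laguerre (l - j) y =
      ∑ k ∈ range (l + 1), (-1) ^ k * ((l - j).choose k : ℝ) * y ^ k / k.factorial :=
    fun j _ ↦ sum_subset (range_subset_range.2 (by omega)) fun k _ hk ↦ by
      rw [Nat.choose_eq_zero_of_lt (by simpa using hk)]
      simp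
  rw [sum_congr rfl fun j hj ↦ by rw [hL j hj, mul_sum], sum_comm, laguerre]
  refine sum_congr rfl fun k _ ↦ ?_
  have hcoeff := sum_choose_mul_choose_sub_mul_pow l k (1 - μ) μ
  rw [sub_add_cancel, one_pow, mul_one] at hcoeff
  calc _ = (∑ j ∈ range (l + 1),
          (l.choose j : ℝ) * (l - j).choose k * (1 - μ) ^ j * μ ^ (l - j)) *
        ((-1) ^ k * y ^ k / k.factorial) := by
        rw [sum_mul]
        exact sum_congr rfl fun j _ ↦ by ring
    _ = _ := by rw [hcoeff]; ring

theorem omegaCoeff_eq (n j ℓ : ℕ) (ζ : ℝ) :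
    omegaCoeff n j ℓ ζ = (n.choose (ℓ - j) : ℝ) * ζ ^ (n - (ℓ - j)) * (1 - ζ) ^ (ℓ - j + 1) := by
  rw [omegaCoeff, ite_eq_left_iff]
  intro h
  rw [Nat.choose_eq_zero_of_lt (not_le.mp h), Nat.cast_zero, zero_mul, zero_mul]

theorem hasSum_sum_sigmaCoeff_mul_omegaCoeff_mul_laguerre {ζ : ℝ} (hζ : |ζ| < 1) (ℓ : ℕ)
    (x : ℝ) :
    HasSum (fun n ↦ (∑ j ∈ range (ℓ + 1), sigmaCoeff j ℓ ζ * omegaCoeff n j ℓ ζ) * laguerre n x)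
      (Real.exp (-(ζ / (1 - ζ) * x)) * laguerre ℓ ((1 + ζ) * (x / (1 - ζ)))) := by
  have h1ζ : 1 - ζ ≠ 0 := by linarith [le_abs_self ζ]
  have h := hasSum_sum fun j (_ : j ∈ range (ℓ + 1)) ↦
    (hasSum_choose_mul_pow_mul_laguerre hζ (ℓ - j) x).mul_left
      (sigmaCoeff j ℓ ζ * (1 - ζ) ^ (ℓ - j + 1))
  set E := Real.exp (-(ζ / (1 - ζ) * x))
  have hvalue : ∑ j ∈ range (ℓ + 1), sigmaCoeff j ℓ ζ * (1 - ζ) ^ (ℓ - j + 1) *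
        (E * laguerre (ℓ - j) (x / (1 - ζ)) / (1 - ζ) ^ (ℓ - j + 1)) =
      E * ∑ j ∈ range (ℓ + 1), (ℓ.choose j : ℝ) * (1 - (1 + ζ)) ^ j *
        (1 + ζ) ^ (ℓ - j) * laguerre (ℓ - j) (x / (1 - ζ)) := by
    rw [mul_sum]
    refine sum_congr rfl fun j _ ↦ ?_
    rw [sigmaCoeff, sub_add_cancel_left]
    field_simp
  rw [← sum_choose_mul_pow_mul_laguerre_sub, ← hvalue]
  refine h.congr_fun fun n ↦ ?_
  rw [sum_mul]
  refine sum_congr rfl fun j _ ↦ ?_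
  rw [omegaCoeff_eq]
  ring

theorem hasSum_lam_laguerre_general (a : ℝ) (ha : 0 < a) (ℓ : ℕ) (x : ℝ) :
    HasSum (fun n : ℕ => lamEig a ℓ n * laguerre n x * Real.exp (-x / 2))
      (laguerre ℓ (a * x) * Real.exp (-(a * x) / 2)) := by
  have ha1 : 0 < a + 1 := by linarith
  have hζ : |(a - 1) / (a + 1)| < 1 := by
    rw [abs_div, abs_of_pos ha1, div_lt_one ha1, abs_lt]
    constructor <;> linarith
  have h :=
    (hasSum_sum_sigmaCoeff_mul_omegaCoeff_mul_laguerre hζ ℓ x).mul_right (Real.exp (-x / 2))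
  have h1ζ : 1 - (a - 1) / (a + 1) = 2 / (a + 1) := by field_simp; ring
  rw [h1ζ, show (1 + (a - 1) / (a + 1)) * (x / (2 / (a + 1))) = a * x by field_simp; ring,
    mul_comm (Real.exp _) (laguerre _ _), mul_assoc, ← Real.exp_add,
    show -((a - 1) / (a + 1) / (2 / (a + 1)) * x) + -x / 2 = -(a * x) / 2 by field_simp; ring] at h
  exact h

/-- Scaled characteristic-function identity:
`∑_{n=0}^∞ λ_{n,a}^{(ℓ)} L_n(x) e^{−x/2} = L_ℓ(a x) e^{−a x/2}` for `x ≥ 0`. -/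
theorem hasSum_lam_laguerre (a : ℝ) (ha : 0 < a) (ℓ : ℕ) (x : ℝ) (hx : 0 ≤ x) :
    HasSum (fun n : ℕ => lamEig a ℓ n * laguerre n x * Real.exp (-x / 2))
      (laguerre ℓ (a * x) * Real.exp (-(a * x) / 2)) :=
  hasSum_lam_laguerre_general a ha ℓ x
end

section
/- Let ζ ∈ (−1,1), k ∈ ℕ, and x ≥ 0. Then the series ∑_{n=k}^∞ binom(n,k) ζ^{n−k} (1−ζ)^{k+1} L_n(x) e^{−x/2} converges and its sum equals e^{−x(1+ζ)/(2(1−ζ))} L_k(x/(1−ζ)). -/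
/-!
Expanding `L_{m+k}(x) = ∑_j C(m+k, j) (-x)^j / j!` turns the series into a double series in
`(j, m)`. For fixed `j`, the identity `C(n, k) C(n, j) = ∑_i C(k, i) C(j, i) C(n+i, k+j)` reduces
the sum over `m` to negative binomial series `∑_m C(m+a, a+d) ζ^m = ζ^d / (1-ζ)^(a+d+1)`; the
factor `C(j, i) / j!` then makes the sum over `j` an exponential series, and what remains is
`e^{-xζ/(1-ζ)} L_k(x/(1-ζ)) / (1-ζ)^(k+1)`. The double series converges absolutely because its
absolute values form the same double series at `(|ζ|, -|x|)`, whose iterated sum was just computed.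
-/

open Finset
open scoped Nat

namespace Nat

theorem add_choose_eq_sum_range (m p K : ℕ) :
    (m + p).choose K = ∑ u ∈ range (K + 1), m.choose u * p.choose (K - u) := by
  rw [add_choose_eq, Finset.Nat.sum_antidiagonal_eq_sum_range_succ_mk]

theorem sum_range_choose_mul_choose_mul_choose (k j c : ℕ) :
    ∑ i ∈ range (k + 1), k.choose i * j.choose i * i.choose c =
      j.choose c * (k + j - c).choose j := by
  rcases lt_or_ge j c with hjc | hcj
  · rw [sum_eq_zero fun i _ ↦ ?_, choose_eq_zero_of_lt hjc, zero_mul]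
    rcases lt_or_ge j i with hji | hij
    · rw [choose_eq_zero_of_lt hji, mul_zero, zero_mul]
    · rw [choose_eq_zero_of_lt (by omega : i < c), mul_zero]
  rcases lt_or_ge k c with hkc | hck
  · rw [sum_eq_zero fun i hi ↦ ?_, choose_eq_zero_of_lt (by omega : k + j - c < j), mul_zero]
    rw [choose_eq_zero_of_lt (n := i) (by grind), mul_zero]
  obtain ⟨d, rfl⟩ := Nat.exists_eq_add_of_le hck
  obtain ⟨e, rfl⟩ := Nat.exists_eq_add_of_le hcj
  rw [add_assoc, sum_range_add, sum_eq_zero fun i hi ↦ by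
      rw [choose_eq_zero_of_lt (mem_range.1 hi), mul_zero], zero_add]
  calc ∑ t ∈ range (d + 1),
        (c + d).choose (c + t) * (c + e).choose (c + t) * (c + t).choose c
      = ∑ t ∈ range (d + 1), (c + e).choose c * (e.choose t * (c + d).choose (d - t)) := by
        refine sum_congr rfl fun t ht ↦ ?_
        rw [choose_symm_of_eq_add (by grind : c + d = (c + t) + (d - t)), mul_assoc,
          choose_mul (le_add_right c t)]
        simp only [add_tsub_cancel_left]
        ring
    _ = (c + e).choose c * (c + d + (c + e) - c).choose (c + e) := by
        rw [← mul_sum, ← add_choose_eq_sum_range,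
          show c + d + (c + e) - c = d + (c + e) by omega, ← choose_symm_add,
          show e + (c + d) = d + (c + e) by omega]

theorem sum_range_choose_mul_choose_mul_choose_sub (n k j : ℕ) :
    ∑ a ∈ range (k + j + 1), n.choose a * a.choose j * j.choose (k + j - a) =
      n.choose k * n.choose j := by
  rcases lt_or_ge n j with hnj | hjn
  · rw [sum_eq_zero fun a _ ↦ ?_, choose_eq_zero_of_lt hnj, mul_zero]
    rcases lt_or_ge n a with hna | han
    · rw [choose_eq_zero_of_lt hna, zero_mul, zero_mul]
    · rw [choose_eq_zero_of_lt (by omega : a < j), mul_zero, zero_mul]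
  obtain ⟨p, rfl⟩ := Nat.exists_eq_add_of_le hjn
  rw [show k + j + 1 = j + (k + 1) by ring, sum_range_add, sum_eq_zero fun a ha ↦ by
      rw [choose_eq_zero_of_lt (mem_range.1 ha), mul_zero, zero_mul], zero_add]
  calc ∑ t ∈ range (k + 1),
        (j + p).choose (j + t) * (j + t).choose j * j.choose (k + j - (j + t))
      = ∑ t ∈ range (k + 1), (j + p).choose j * (p.choose t * j.choose (k - t)) := by
        refine sum_congr rfl fun t _ ↦ ?_
        rw [choose_mul (le_add_right j t)]
        simp only [add_tsub_cancel_left, show k + j - (j + t) = k - t by omega]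
        ring
    _ = (j + p).choose k * (j + p).choose j := by
        rw [← mul_sum, ← add_choose_eq_sum_range, add_comm p, mul_comm]

theorem choose_mul_choose_eq_sum_range (n k j : ℕ) :
    n.choose k * n.choose j =
      ∑ i ∈ range (k + 1), k.choose i * j.choose i * (n + i).choose (k + j) := by
  calc n.choose k * n.choose j
      = ∑ a ∈ range (k + j + 1),
          n.choose a * (j.choose (k + j - a) * (k + j - (k + j - a)).choose j) := by
        rw [← sum_range_choose_mul_choose_mul_choose_sub]
        refine sum_congr rfl fun a ha ↦ ?_
        rw [show k + j - (k + j - a) = a by grind]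
        ring
    _ = ∑ a ∈ range (k + j + 1), n.choose a *
          ∑ i ∈ range (k + 1), k.choose i * j.choose i * i.choose (k + j - a) := by
        simp only [sum_range_choose_mul_choose_mul_choose]
    _ = _ := by
        simp only [mul_sum, add_choose_eq_sum_range n]
        rw [sum_comm]
        refine sum_congr rfl fun i _ ↦ sum_congr rfl fun a _ ↦ by ring

end Nat

section NormedField

variable {𝕜 : Type*} [NormedField 𝕜]

theorem hasSum_choose_add_mul_geometric (a d : ℕ) {r : 𝕜} (hr : ‖r‖ < 1) :
    HasSum (fun m ↦ ((m + a).choose (a + d) : 𝕜) * r ^ m) (r ^ d / (1 - r) ^ (a + d + 1)) := by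
  have h := (hasSum_choose_mul_geometric_of_norm_lt_one (a + d) hr).mul_left (r ^ d)
  rw [← hasSum_nat_add_iff' d, sum_eq_zero fun t ht ↦ by
      rw [Nat.choose_eq_zero_of_lt (by grind), Nat.cast_zero, zero_mul],
    sub_zero, div_eq_mul_one_div]
  have e (m : ℕ) : r ^ d * (((m + (a + d)).choose (a + d) : 𝕜) * r ^ m) =
      ((m + d + a).choose (a + d) : 𝕜) * r ^ (m + d) := by
    rw [show m + d + a = m + (a + d) by ring, pow_add]
    ring
  simpa only [e] using h

theorem hasSum_choose_mul_choose_mul_geometric (k j : ℕ) {r : 𝕜} (hr : ‖r‖ < 1) :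
    HasSum (fun m ↦ ((m + k).choose k : 𝕜) * (m + k).choose j * r ^ m)
      (∑ i ∈ range (k + 1),
        (k.choose i : 𝕜) * j.choose i * (r ^ (j - i) / (1 - r) ^ (k + j + 1))) := by
  have h : ∀ i ∈ range (k + 1), HasSum
      (fun m ↦ (k.choose i : 𝕜) * j.choose i * (((m + k + i).choose (k + j) : 𝕜) * r ^ m))
      ((k.choose i : 𝕜) * j.choose i * (r ^ (j - i) / (1 - r) ^ (k + j + 1))) := by
    intro i _
    rcases lt_or_ge j i with hji | hij
    · simp [Nat.choose_eq_zero_of_lt hji, hasSum_zero]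
    · have h := hasSum_choose_add_mul_geometric (k + i) (j - i) hr
      simp only [← add_assoc, show k + i + (j - i) = k + j by omega] at h
      exact h.mul_left _
  convert hasSum_sum h with m
  rw [← Nat.cast_mul, Nat.choose_mul_choose_eq_sum_range]
  push_cast
  rw [sum_mul]
  exact sum_congr rfl fun i _ ↦ by ring

end NormedField

theorem Real.hasSum_choose_mul_pow_sub_div_factorial (i : ℕ) (w : ℝ) :
    HasSum (fun j ↦ (j.choose i : ℝ) * w ^ (j - i) / j !) (Real.exp w / i !) := by
  rw [← hasSum_nat_add_iff' i, sum_eq_zero fun j hj ↦ by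
      rw [Nat.choose_eq_zero_of_lt (mem_range.1 hj), Nat.cast_zero, zero_mul, zero_div],
    sub_zero]
  have h := (NormedSpace.expSeries_div_hasSum_exp w).div_const (i ! : ℝ)
  rw [← Real.exp_eq_exp_ℝ] at h
  have e (a : ℕ) :
      ((a + i).choose i : ℝ) * w ^ (a + i - i) / (a + i) ! = w ^ a / a ! / i ! := by
    have hfac := congrArg (Nat.cast (R := ℝ)) (Nat.add_choose_mul_factorial_mul_factorial a i)
    push_cast at hfac
    have hchoose : ((a + i).choose i : ℝ) ≠ 0 := by
      exact_mod_cast (Nat.choose_pos (Nat.le_add_left i a)).ne'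
    rw [add_tsub_cancel_right, ← hfac]
    field_simp
  simpa only [e] using h

theorem hasSum_sum_choose_mul_choose_mul_pow_div_factorial (k : ℕ) {ζ : ℝ} (hζ : ζ ≠ 1)
    (x : ℝ) :
    HasSum (fun j ↦ (∑ i ∈ range (k + 1),
        (k.choose i : ℝ) * j.choose i * (ζ ^ (j - i) / (1 - ζ) ^ (k + j + 1))) *
          ((-x) ^ j / j !))
      (Real.exp (-(x * ζ) / (1 - ζ)) * laguerre k (x / (1 - ζ)) / (1 - ζ) ^ (k + 1)) := by
  have hζ' : 1 - ζ ≠ 0 := sub_ne_zero.2 hζ.symm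
  have h : ∀ i ∈ range (k + 1), HasSum
      (fun j ↦ (k.choose i : ℝ) * (-x / (1 - ζ)) ^ i / (1 - ζ) ^ (k + 1) *
        ((j.choose i : ℝ) * (-(x * ζ) / (1 - ζ)) ^ (j - i) / j !))
      ((k.choose i : ℝ) * (-x / (1 - ζ)) ^ i / (1 - ζ) ^ (k + 1) *
        (Real.exp (-(x * ζ) / (1 - ζ)) / i !)) :=
    fun i _ ↦ (Real.hasSum_choose_mul_pow_sub_div_factorial i _).mul_left _
  convert hasSum_sum h using 1
  · funext j
    rw [sum_mul]
    refine sum_congr rfl fun i _ ↦ ?_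
    rcases lt_or_ge j i with hji | hij
    · simp [Nat.choose_eq_zero_of_lt hji]
    · obtain ⟨d, rfl⟩ := Nat.exists_eq_add_of_le hij
      rw [add_tsub_cancel_left, div_pow, div_pow, pow_add, pow_add]
      field_simp
      ring
  · rw [laguerre, mul_sum, sum_div]
    refine sum_congr rfl fun i _ ↦ ?_
    field_simp
    ring

noncomputable def laguerreDoubleTerm (k : ℕ) (ζ x : ℝ) (p : ℕ × ℕ) : ℝ :=
  (p.2 + k).choose k * (p.2 + k).choose p.1 * ζ ^ p.2 * ((-x) ^ p.1 / p.1 !)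

namespace laguerreDoubleTerm

variable (k : ℕ) {ζ : ℝ} (x : ℝ)

theorem hasSum_fst (m : ℕ) :
    HasSum (fun j ↦ laguerreDoubleTerm k ζ x (j, m))
      ((m + k).choose k * ζ ^ m * laguerre (m + k) x) := by
  rw [laguerre, mul_sum]
  convert hasSum_sum_of_ne_finset_zero (L := SummationFilter.unconditional ℕ)
    fun j hj ↦ ?_ using 1
  · exact sum_congr rfl fun j _ ↦ by rw [laguerreDoubleTerm, neg_pow]; ring
  · rw [laguerreDoubleTerm, Nat.choose_eq_zero_of_lt (k := j) (by simpa using hj)]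
    simp

theorem hasSum_snd (hζ : |ζ| < 1) (j : ℕ) :
    HasSum (fun m ↦ laguerreDoubleTerm k ζ x (j, m))
      ((∑ i ∈ range (k + 1),
        (k.choose i : ℝ) * j.choose i * (ζ ^ (j - i) / (1 - ζ) ^ (k + j + 1))) *
          ((-x) ^ j / j !)) :=
  (hasSum_choose_mul_choose_mul_geometric k j (r := ζ) hζ).mul_right _

theorem summable (hζ : |ζ| < 1) : Summable (laguerreDoubleTerm k ζ x) := by
  have habs : Summable (laguerreDoubleTerm k |ζ| (-|x|)) := by
    refine (summable_prod_of_nonneg fun p ↦ ?_).2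
      ⟨fun j ↦ (hasSum_snd k _ (by rwa [abs_abs]) j).summable, ?_⟩
    · simp only [laguerreDoubleTerm, neg_neg]
      positivity
    · exact (hasSum_sum_choose_mul_choose_mul_pow_div_factorial k hζ.ne _).summable.congr
        fun j ↦ ((hasSum_snd k _ (by rwa [abs_abs]) j).tsum_eq).symm
  refine habs.of_norm_bounded fun p ↦ le_of_eq ?_
  simp [laguerreDoubleTerm]

theorem hasSum (hζ : |ζ| < 1) :
    HasSum (laguerreDoubleTerm k ζ x)
      (Real.exp (-(x * ζ) / (1 - ζ)) * laguerre k (x / (1 - ζ)) / (1 - ζ) ^ (k + 1)) := by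
  have h := (summable k x hζ).hasSum
  rw [(hasSum_sum_choose_mul_choose_mul_pow_div_factorial k (abs_lt.1 hζ).2.ne x).unique
    (h.prod_fiberwise (hasSum_snd k x hζ))]
  exact h

end laguerreDoubleTerm

theorem hasSum_laguerre_multiplication_general (ζ : ℝ) (h₁ : -1 < ζ) (h₂ : ζ < 1) (k : ℕ)
    (x : ℝ) :
    HasSum
      (fun m : ℕ =>
        ((m + k).choose k : ℝ) * ζ ^ m * (1 - ζ) ^ (k + 1) * laguerre (m + k) x *
          Real.exp (-x / 2))
      (Real.exp (-(x * (1 + ζ)) / (2 * (1 - ζ))) * laguerre k (x / (1 - ζ))) := by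
  have hζ : 1 - ζ ≠ 0 := by linarith
  have h := ((Equiv.prodComm ℕ ℕ).hasSum_iff.2
    (laguerreDoubleTerm.hasSum k x (abs_lt.2 ⟨h₁, h₂⟩))).prod_fiberwise
    (laguerreDoubleTerm.hasSum_fst k x)
  have hexp : Real.exp (-(x * (1 + ζ)) / (2 * (1 - ζ))) =
      Real.exp (-(x * ζ) / (1 - ζ)) * Real.exp (-x / 2) := by
    rw [← Real.exp_add]
    congr 1
    field_simp
    ring
  have hsum : Real.exp (-(x * (1 + ζ)) / (2 * (1 - ζ))) * laguerre k (x / (1 - ζ)) =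
      Real.exp (-(x * ζ) / (1 - ζ)) * laguerre k (x / (1 - ζ)) / (1 - ζ) ^ (k + 1) *
        ((1 - ζ) ^ (k + 1) * Real.exp (-x / 2)) := by
    rw [hexp]
    field_simp
  rw [hsum]
  simpa only [mul_comm, mul_assoc, mul_left_comm] using
    h.mul_right ((1 - ζ) ^ (k + 1) * Real.exp (-x / 2))

/-- Erdélyi's first multiplication theorem in summed form: for `ζ ∈ (−1,1)`, `k ∈ ℕ`,
`x ≥ 0`, the series `∑_{n=k}^∞ binom(n,k) ζ^{n−k} (1−ζ)^{k+1} L_n(x) e^{−x/2}`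
(indexed by `n = m + k`, `m ∈ ℕ`) converges with sum
`e^{−x(1+ζ)/(2(1−ζ))} L_k(x/(1−ζ))`. -/
theorem hasSum_laguerre_multiplication (ζ : ℝ) (h₁ : -1 < ζ) (h₂ : ζ < 1) (k : ℕ)
    (x : ℝ) (hx : 0 ≤ x) :
    HasSum
      (fun m : ℕ =>
        ((m + k).choose k : ℝ) * ζ ^ m * (1 - ζ) ^ (k + 1) * laguerre (m + k) x *
          Real.exp (-x / 2))
      (Real.exp (-(x * (1 + ζ)) / (2 * (1 - ζ))) * laguerre k (x / (1 - ζ))) :=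
  hasSum_laguerre_multiplication_general ζ h₁ h₂ k x
end

section
/- Let d ≥ 1, let a < b be integers, let Λ = ℤ^d ∩ [a,b]^d, let Λ₀ ⊆ Λ, and let μ > 0. Then ∑_{x ∈ Λ₀} ∑_{y ∈ Λ∖Λ₀} e^{−μ|x−y|} ≤ |∂Λ₀| · ((1+e^{−μ})/(1−e^{−μ}))^{2d}, where |∂Λ₀| is the cardinality of the boundary ∂Λ₀. (In particular, the double sum is bounded by |∂Λ₀| · S², where S = ∑_{v ∈ ℤ^d} e^{−μ|v|} = ((1+e^{−μ})/(1−e^{−μ}))^d.) -/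
/-- The ℓ¹-distance on `ℤ^d`. -/
def l1dist {d : ℕ} (x y : Fin d → ℤ) : ℤ := ∑ i, |x i - y i|

/-- The box `Λ = ℤ^d ∩ [a,b]^d` as a finite set. -/
noncomputable def latticeBox (d : ℕ) (a b : ℤ) : Finset (Fin d → ℤ) :=
  Fintype.piFinset fun _ => Finset.Icc a b

/-- The boundary `∂Λ₀` of a subregion `Λ₀` of the box. -/
noncomputable def latticeBoundary (d : ℕ) (a b : ℤ) (Λ₀ : Finset (Fin d → ℤ)) : Finset (Fin d → ℤ) :=
  Λ₀.filter fun z => ∃ w ∈ latticeBox d a b \ Λ₀, l1dist z w = 1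

/-!
Walking from `x ∈ Λ₀` to `y ∈ Λ ∖ Λ₀` along an `ℓ¹`-geodesic inside the box, the last point
of `Λ₀` is a boundary point `z` with `|x - z| + |z - y| ≤ |x - y|`, so
`e^{-μ|x-y|} ≤ ∑_{z ∈ ∂Λ₀} e^{-μ|x-z|} e^{-μ|z-y|}`. Summing over all `x, y` in the box, the
sum factorises for each `z` into two sums `∑_x e^{-μ|x-z|}`, each a product of `d`
one-dimensional sums bounded by the two-sided geometric series
`∑_{n ∈ ℤ} e^{-μ|n|} = (1 + e^{-μ}) / (1 - e^{-μ})`.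
-/

open Finset

section L1dist

variable {d : ℕ}

lemma l1dist_nonneg (x y : Fin d → ℤ) : 0 ≤ l1dist x y :=
  sum_nonneg fun _ _ => abs_nonneg _

@[simp]
lemma l1dist_self (x : Fin d → ℤ) : l1dist x x = 0 := by
  simp [l1dist]

lemma l1dist_comm (x y : Fin d → ℤ) : l1dist x y = l1dist y x := by
  simp [l1dist, abs_sub_comm]

lemma l1dist_triangle (x y z : Fin d → ℤ) : l1dist x z ≤ l1dist x y + l1dist y z := by
  simp only [l1dist, ← sum_add_distrib]
  exact sum_le_sum fun i _ => abs_sub_le _ _ _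

lemma exists_l1dist_step {x y : Fin d → ℤ} (hxy : x ≠ y) :
    ∃ x', l1dist x x' = 1 ∧ l1dist x' y + 1 = l1dist x y ∧
      ∀ i, x' i ∈ Set.uIcc (x i) (y i) := by
  obtain ⟨i, hi⟩ := Function.ne_iff.1 hxy
  set x' := Function.update x i (x i + if x i < y i then 1 else -1)
  have hx'i : x' i = x i + if x i < y i then 1 else -1 := Function.update_self ..
  have hx'j : ∀ j ≠ i, x' j = x j := fun j hj => Function.update_of_ne hj ..
  refine ⟨x', ?_, ?_, fun j => ?_⟩
  · rw [l1dist, sum_eq_single i (fun j _ hj => by simp [hx'j j hj]) (by simp), hx'i]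
    split_ifs <;> simp
  · have hcoord : ∀ j, |x' j - y j| + (if i = j then 1 else 0) = |x j - y j| := by
      intro j
      by_cases hj : j = i
      · subst hj; rw [hx'i, if_pos rfl, abs_eq_max_neg, abs_eq_max_neg]; split_ifs <;> omega
      · simp [hx'j j hj, Ne.symm hj]
    simp only [l1dist, ← hcoord, sum_add_distrib, sum_ite_eq, mem_univ, if_true]
  · by_cases hj : j = i
    · subst hj; rw [hx'i, Set.mem_uIcc]; split_ifs <;> omega
    · rw [hx'j j hj]; exact Set.left_mem_uIcc

end L1dist

section Boundary

variable {d : ℕ} {a b : ℤ} {Λ₀ : Finset (Fin d → ℤ)}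

lemma mem_latticeBox_of_mem_uIcc {x y z : Fin d → ℤ} (hx : x ∈ latticeBox d a b)
    (hy : y ∈ latticeBox d a b) (hz : ∀ i, z i ∈ Set.uIcc (x i) (y i)) :
    z ∈ latticeBox d a b := by
  simp only [latticeBox, Fintype.mem_piFinset, mem_Icc] at hx hy ⊢
  exact fun i => Set.uIcc_subset_Icc (hx i) (hy i) (hz i)

lemma exists_mem_latticeBoundary_between (hΛ₀ : Λ₀ ⊆ latticeBox d a b) {x y : Fin d → ℤ}
    (hx : x ∈ Λ₀) (hy : y ∈ latticeBox d a b \ Λ₀) :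
    ∃ z ∈ latticeBoundary d a b Λ₀, l1dist x z + l1dist z y ≤ l1dist x y := by
  have hxy : x ≠ y := by rintro rfl; exact (mem_sdiff.1 hy).2 hx
  obtain ⟨x', hxx', hx'y, hx'⟩ := exists_l1dist_step hxy
  by_cases hx'Λ₀ : x' ∈ Λ₀
  · obtain ⟨z, hz, hle⟩ := exists_mem_latticeBoundary_between hΛ₀ hx'Λ₀ hy
    exact ⟨z, hz, by linarith [l1dist_triangle x x' z]⟩
  · have hx'box := mem_latticeBox_of_mem_uIcc (hΛ₀ hx) (mem_sdiff.1 hy).1 hx'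
    exact ⟨x, mem_filter.2 ⟨hx, x', mem_sdiff.2 ⟨hx'box, hx'Λ₀⟩, hxx'⟩, by simp⟩
termination_by (l1dist x y).toNat
decreasing_by have := l1dist_nonneg x' y; omega

lemma exp_neg_mul_l1dist_le_sum_latticeBoundary {μ : ℝ} (hμ : 0 ≤ μ)
    (hΛ₀ : Λ₀ ⊆ latticeBox d a b) {x y : Fin d → ℤ} (hx : x ∈ Λ₀)
    (hy : y ∈ latticeBox d a b \ Λ₀) :
    Real.exp (-μ * l1dist x y) ≤ ∑ z ∈ latticeBoundary d a b Λ₀,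
      Real.exp (-μ * l1dist x z) * Real.exp (-μ * l1dist z y) := by
  obtain ⟨z, hz, hle⟩ := exists_mem_latticeBoundary_between hΛ₀ hx hy
  have hle' : (l1dist x z : ℝ) + l1dist z y ≤ l1dist x y := by exact_mod_cast hle
  calc Real.exp (-μ * l1dist x y)
      ≤ Real.exp (-μ * l1dist x z) * Real.exp (-μ * l1dist z y) := by
        rw [← Real.exp_add, Real.exp_le_exp]; nlinarith
    _ ≤ _ := single_le_sum
        (f := fun z => Real.exp (-μ * l1dist x z) * Real.exp (-μ * l1dist z y))
        (fun _ _ => by positivity) hz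

end Boundary

section GeometricSums

variable {q : ℝ}

lemma hasSum_pow_natAbs (hq0 : 0 ≤ q) (hq1 : q < 1) :
    HasSum (fun n : ℤ => q ^ n.natAbs) ((1 + q) / (1 - q)) := by
  have hpos := hasSum_geometric_of_lt_one hq0 hq1
  have hneg : HasSum (fun n : ℕ => q ^ (n + 1)) (q * (1 - q)⁻¹) := by
    simpa only [pow_succ'] using hpos.mul_left q
  convert HasSum.of_nat_of_neg_add_one (f := fun n : ℤ => q ^ n.natAbs) hpos
    (by simpa only [Int.natAbs_neg, ← Nat.cast_add_one, Int.natAbs_natCast] using hneg) using 1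
  ring

lemma sum_pow_natAbs_sub_le (hq0 : 0 ≤ q) (hq1 : q < 1) (s : Finset ℤ) (c : ℤ) :
    ∑ t ∈ s, q ^ (t - c).natAbs ≤ (1 + q) / (1 - q) :=
  sum_le_hasSum s (fun _ _ => by positivity)
    ((Equiv.subRight c).hasSum_iff (f := fun n : ℤ => q ^ n.natAbs)
      |>.2 (hasSum_pow_natAbs hq0 hq1))

end GeometricSums

section ExpDecay

variable {d : ℕ}

lemma exp_neg_mul_l1dist (μ : ℝ) (x y : Fin d → ℤ) :
    Real.exp (-μ * l1dist x y) = ∏ i, Real.exp (-μ) ^ (x i - y i).natAbs := by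
  simp only [l1dist, Int.cast_sum, Int.cast_abs, mul_sum, Real.exp_sum, ← Real.exp_nat_mul,
    Nat.cast_natAbs]
  exact prod_congr rfl fun _ _ => by ring_nf

lemma sum_piFinset_exp_neg_mul_l1dist_le {μ : ℝ} (hμ : 0 < μ) (s : Fin d → Finset ℤ)
    (z : Fin d → ℤ) :
    ∑ x ∈ Fintype.piFinset s, Real.exp (-μ * l1dist x z) ≤
      ((1 + Real.exp (-μ)) / (1 - Real.exp (-μ))) ^ d := by
  have hq1 : Real.exp (-μ) < 1 := Real.exp_lt_one_iff.2 (neg_neg_of_pos hμ)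
  simp only [exp_neg_mul_l1dist]
  rw [← prod_univ_sum s fun i t => Real.exp (-μ) ^ (t - z i).natAbs]
  calc ∏ i, ∑ t ∈ s i, Real.exp (-μ) ^ (t - z i).natAbs
      ≤ ∏ _i : Fin d, (1 + Real.exp (-μ)) / (1 - Real.exp (-μ)) :=
        prod_le_prod (fun _ _ => by positivity)
          fun i _ => sum_pow_natAbs_sub_le (Real.exp_pos _).le hq1 (s i) (z i)
    _ = _ := by rw [prod_const, card_univ, Fintype.card_fin]

end ExpDecay

theorem exp_decay_double_sum_area_bound_general (d : ℕ) (a b : ℤ)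
    (μ : ℝ) (hμ : 0 < μ) (Λ₀ : Finset (Fin d → ℤ)) (hΛ₀ : Λ₀ ⊆ latticeBox d a b) :
    ∑ x ∈ Λ₀, ∑ y ∈ latticeBox d a b \ Λ₀, Real.exp (-μ * (l1dist x y : ℝ)) ≤
      ((latticeBoundary d a b Λ₀).card : ℝ) *
        ((1 + Real.exp (-μ)) / (1 - Real.exp (-μ))) ^ (2 * d) := by
  set Λ := latticeBox d a b
  set K : (Fin d → ℤ) → (Fin d → ℤ) → ℝ := fun x y => Real.exp (-μ * l1dist x y)
  set S := ((1 + Real.exp (-μ)) / (1 - Real.exp (-μ))) ^ d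
  have hsite : ∀ z, ∑ x ∈ Λ, K x z ≤ S := sum_piFinset_exp_neg_mul_l1dist_le hμ _
  have hsite' : ∀ z, ∑ y ∈ Λ, K z y ≤ S := fun z => by
    simpa only [K, l1dist_comm z] using hsite z
  calc ∑ x ∈ Λ₀, ∑ y ∈ Λ \ Λ₀, K x y
      ≤ ∑ x ∈ Λ₀, ∑ y ∈ Λ \ Λ₀, ∑ z ∈ latticeBoundary d a b Λ₀, K x z * K z y :=
        sum_le_sum fun x hx => sum_le_sum fun y hy =>
          exp_neg_mul_l1dist_le_sum_latticeBoundary hμ.le hΛ₀ hx hy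
    _ ≤ ∑ x ∈ Λ, ∑ y ∈ Λ, ∑ z ∈ latticeBoundary d a b Λ₀, K x z * K z y := by
        refine sum_le_sum_of_subset_of_nonneg hΛ₀ (fun _ _ _ => by positivity) |>.trans ?_
        exact sum_le_sum fun _ _ => sum_le_sum_of_subset_of_nonneg sdiff_subset
          fun _ _ _ => by positivity
    _ = ∑ z ∈ latticeBoundary d a b Λ₀, (∑ x ∈ Λ, K x z) * ∑ y ∈ Λ, K z y := by
        simp only [sum_mul_sum]
        exact (sum_congr rfl fun _ _ => sum_comm).trans sum_comm
    _ ≤ ∑ _z ∈ latticeBoundary d a b Λ₀, S * S :=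
        sum_le_sum fun z _ => mul_le_mul (hsite z) (hsite' z) (by positivity)
          ((sum_nonneg fun _ _ => by positivity).trans (hsite z))
    _ = _ := by rw [sum_const, nsmul_eq_mul, ← pow_add, two_mul]

/-- Area-law type bound:
`∑_{x ∈ Λ₀} ∑_{y ∈ Λ∖Λ₀} e^{−μ|x−y|} ≤ |∂Λ₀| ((1+e^{−μ})/(1−e^{−μ}))^{2d}`. -/
theorem exp_decay_double_sum_area_bound (d : ℕ) (hd : 1 ≤ d) (a b : ℤ) (hab : a < b)
    (μ : ℝ) (hμ : 0 < μ) (Λ₀ : Finset (Fin d → ℤ)) (hΛ₀ : Λ₀ ⊆ latticeBox d a b) :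
    ∑ x ∈ Λ₀, ∑ y ∈ latticeBox d a b \ Λ₀, Real.exp (-μ * (l1dist x y : ℝ)) ≤
      ((latticeBoundary d a b Λ₀).card : ℝ) *
        ((1 + Real.exp (-μ)) / (1 - Real.exp (-μ))) ^ (2 * d) :=
  exp_decay_double_sum_area_bound_general d a b μ hμ Λ₀ hΛ₀
end

section
/- Let ζ ∈ (−1,1) with ζ ≠ 0, and for n ∈ ℕ define λ_n = −ζ(1−ζ) if n = 0 and λ_n = n(1+ζ)(1−ζ)² ζ^{n−1} − (1−ζ) ζ^{n+1} for n ≥ 1. Then for every even n: if n > ζ²/(1−ζ²) then λ_n has the same sign as ζ, and if 0 ≤ n < ζ²/(1−ζ²) then λ_n has the sign opposite to ζ. -/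
/-- The eigenvalues `λ_{n,a}^{(1)}` of `ρ_a^{(1)}` written in terms of `ζ = ζ_a`. -/
noncomputable def lamOne (ζ : ℝ) (n : ℕ) : ℝ :=
  if n = 0 then -ζ * (1 - ζ)
  else (n : ℝ) * (1 + ζ) * (1 - ζ) ^ 2 * ζ ^ (n - 1) - (1 - ζ) * ζ ^ (n + 1)

lemma lamOne_factor (ζ : ℝ) (n : ℕ) (hn : 1 ≤ n) :
    lamOne ζ n = ζ ^ (n - 1) * ((1 - ζ) * ((n : ℝ) * (1 - ζ ^ 2) - ζ ^ 2)) := by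
  obtain ⟨m, rfl⟩ := Nat.exists_eq_add_of_le hn
  simp only [lamOne, Nat.add_sub_cancel_left, if_neg (by omega : 1 + m ≠ 0)]
  have : ζ ^ (1 + m + 1) = ζ ^ m * ζ ^ 2 := by ring
  rw [this]; ring

/-- Sign pattern of the even-indexed eigenvalues `λ_n = λ_{n,a}^{(1)}`: for even `n`,
`sgn(λ_n) = sgn(ζ)` when `n > ζ²/(1−ζ²)`, and `sgn(λ_n) = −sgn(ζ)` when
`0 ≤ n < ζ²/(1−ζ²)`. -/
theorem sign_lamOne_even (ζ : ℝ) (h₁ : -1 < ζ) (h₂ : ζ < 1) (hζ : ζ ≠ 0)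
    (n : ℕ) (hn : Even n) :
    (ζ ^ 2 / (1 - ζ ^ 2) < (n : ℝ) → Real.sign (lamOne ζ n) = Real.sign ζ) ∧
      ((n : ℝ) < ζ ^ 2 / (1 - ζ ^ 2) → Real.sign (lamOne ζ n) = -Real.sign ζ) := by
  have hA : 0 < 1 - ζ ^ 2 := by nlinarith
  have hz2 : 0 < ζ ^ 2 := by positivity
  rcases Nat.eq_zero_or_pos n with h0 | hpos
  · subst h0
    constructor
    · intro h
      exfalso
      have : 0 < ζ ^ 2 / (1 - ζ ^ 2) := div_pos hz2 hA
      simp only [Nat.cast_zero] at h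
      linarith
    · intro _
      have h0 : lamOne ζ 0 = -ζ * (1 - ζ) := by simp [lamOne]
      rw [h0]
      rcases lt_or_gt_of_ne hζ with hneg | hposζ
      · rw [Real.sign_of_neg hneg, Real.sign_of_pos (by nlinarith : (0:ℝ) < -ζ * (1 - ζ))]
        norm_num
      · rw [Real.sign_of_pos hposζ, Real.sign_of_neg (by nlinarith : -ζ * (1 - ζ) < 0)]
  · have hfac := lamOne_factor ζ n hpos
    have hodd : Odd (n - 1) := by
      rcases hn with ⟨k, hk⟩
      exact ⟨k - 1, by omega⟩
    constructor
    · intro h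
      have hB : 0 < (n : ℝ) * (1 - ζ ^ 2) - ζ ^ 2 := by
        rw [div_lt_iff₀ hA] at h; linarith
      have hR : 0 < (1 - ζ) * ((n : ℝ) * (1 - ζ ^ 2) - ζ ^ 2) :=
        mul_pos (by linarith) hB
      rcases lt_or_gt_of_ne hζ with hneg | hposζ
      · have hp : ζ ^ (n - 1) < 0 := hodd.pow_neg hneg
        rw [hfac, Real.sign_of_neg hneg, Real.sign_of_neg (mul_neg_of_neg_of_pos hp hR)]
      · have hp : 0 < ζ ^ (n - 1) := pow_pos hposζ _
        rw [hfac, Real.sign_of_pos hposζ, Real.sign_of_pos (mul_pos hp hR)]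
    · intro h
      have hB : (n : ℝ) * (1 - ζ ^ 2) - ζ ^ 2 < 0 := by
        rw [lt_div_iff₀ hA] at h; linarith
      have hR : (1 - ζ) * ((n : ℝ) * (1 - ζ ^ 2) - ζ ^ 2) < 0 :=
        mul_neg_of_pos_of_neg (by linarith) hB
      rcases lt_or_gt_of_ne hζ with hneg | hposζ
      · have hp : ζ ^ (n - 1) < 0 := hodd.pow_neg hneg
        rw [hfac, Real.sign_of_neg hneg, Real.sign_of_pos (mul_pos_of_neg_of_neg hp hR)]
        norm_num
      · have hp : 0 < ζ ^ (n - 1) := pow_pos hposζ _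
        rw [hfac, Real.sign_of_pos hposζ, Real.sign_of_neg (mul_neg_of_pos_of_neg hp hR)]
end
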